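/- Let B be the 6×6 Hermitian matrix [[0,0,0,0,0,α],[0,0,0,0,2α,1],[0,0,2α,0,1,0],[0,0,0,α,1,0],[0,2α,1,1,0,0],[α,1,0,0,0,0]] with α ∈ ℝ. Then B has rank 4 if and only if α = 0, and when α = 0, B has exactly two positive and two negative eigenvalues. -/

import Mathlib

noncomputable def Bmat19 (α : ℝ) : Matrix (Fin 6) (Fin 6) ℝ :=
  !![0, 0, 0, 0, 0, α;
     0, 0, 0, 0, 2 * α, 1;
     0, 0, 2 * α, 0, 1, 0;
     0, 0, 0, α, 1, 0;
     0, 2 * α, 1, 1, 0, 0;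
     α, 1, 0, 0, 0, 0]

/-!
For `α ≠ 0`, `det (Bmat19 α) = 8 α⁶`, so the matrix is invertible. For `α = 0`, rows `1, 2, 4, 5`
and columns `5, 4, 2, 1` cut out an identity minor, and `Bmat19 0` factors through these columns
and rows as `B.submatrix id c * B.submatrix r id`, so its rank is `4`. The nonzero entries of `Bmat19 0` only join indices in
`{0, 1, 2, 3}` to indices in `{4, 5}`, so conjugation by `diag(1, 1, 1, 1, -1, -1)` turns it into
its negative. Its spectrum is therefore symmetric about `0`, and the four nonzero eigenvalues
split evenly between the two signs.
-/

namespace Matrix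

variable {n : Type*} [Fintype n] [DecidableEq n]

theorem charpoly_neg_eq_of_mul_mul_eq_neg {R : Type*} [CommRing R] {A D : Matrix n n R}
    (hD : D * D = 1) (h : D * A * D = -A) : (-A).charpoly = A.charpoly := by
  rw [← h]
  convert charpoly_units_conj (⟨D, D, hD, hD⟩ : (Matrix n n R)ˣ) A using 3
  exact (inv_eq_left_inv hD).symm

namespace IsHermitian

variable {𝕜 : Type*} [RCLike 𝕜] {A : Matrix n n 𝕜}

open Polynomial in
theorem map_neg_eigenvalues_eq (hA : A.IsHermitian) (h : (-A).charpoly = A.charpoly) :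
    Multiset.map (fun i => -hA.eigenvalues i) Finset.univ.val =
      Multiset.map hA.eigenvalues Finset.univ.val := by
  have hroots (f : n → ℝ) :
      (∏ i, (X - C (f i : 𝕜))).roots.map RCLike.re = Multiset.map f Finset.univ.val := by
    rw [roots_prod _ _ (Finset.prod_ne_zero_iff.2 fun i _ => X_sub_C_ne_zero _)]
    simp [Multiset.map_map]
  have hneg := hA.charpoly_cfc_eq (-·)
  rw [cfc_neg_id A, h, hA.charpoly_eq] at hneg
  simpa only [hroots] using (congrArg (fun p => p.roots.map RCLike.re) hneg).symm

theorem card_pos_eigenvalues_eq_card_neg (hA : A.IsHermitian) (h : (-A).charpoly = A.charpoly) :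
    Fintype.card {i // 0 < hA.eigenvalues i} = Fintype.card {i // hA.eigenvalues i < 0} := by
  have := congrArg (Multiset.countP (0 < ·)) (hA.map_neg_eigenvalues_eq h)
  simp only [Multiset.countP_map, Left.neg_pos_iff] at this
  simpa [Fintype.card_subtype, Finset.card_def] using this.symm

theorem card_pos_add_card_neg_eigenvalues (hA : A.IsHermitian) :
    Fintype.card {i // 0 < hA.eigenvalues i} + Fintype.card {i // hA.eigenvalues i < 0} =
      A.rank := by
  rw [hA.rank_eq_card_non_zero_eigs, add_comm, ← Fintype.card_subtype_or_disjoint]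
  · simp only [ne_iff_lt_or_gt]
  · exact fun p hlt hgt i hi => (hlt i hi).not_gt (hgt i hi)

end IsHermitian

end Matrix

open Matrix

theorem det_Bmat19 (α : ℝ) : (Bmat19 α).det = 8 * α ^ 6 := by
  simp [Bmat19, det_succ_row_zero, Fin.sum_univ_succ, Fin.succAbove]
  ring

theorem rank_Bmat19_of_ne_zero {α : ℝ} (hα : α ≠ 0) : (Bmat19 α).rank = 6 := by
  rw [rank_of_det_ne_zero (by rw [det_Bmat19]; positivity), Fintype.card_fin]

theorem rank_Bmat19_zero : (Bmat19 0).rank = 4 := by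
  let r : Fin 4 → Fin 6 := ![1, 2, 4, 5]
  let c : Fin 4 → Fin 6 := ![5, 4, 2, 1]
  have hminor : (Bmat19 0).submatrix r c = 1 := by
    ext i j; fin_cases i <;> fin_cases j <;> simp [Bmat19, r, c]
  have hfactor : Bmat19 0 = (Bmat19 0).submatrix id c * (Bmat19 0).submatrix r id := by
    ext i j
    simp only [mul_apply, Fin.sum_univ_four, submatrix_apply, id_eq]
    fin_cases i <;> fin_cases j <;> simp [Bmat19, r, c]
  apply le_antisymm
  · calc (Bmat19 0).rank = ((Bmat19 0).submatrix id c * (Bmat19 0).submatrix r id).rank :=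
          congrArg rank hfactor
      _ ≤ ((Bmat19 0).submatrix id c).rank := rank_mul_le_left _ _
      _ ≤ 4 := rank_le_width _
  · calc 4 = (1 : Matrix (Fin 4) (Fin 4) ℝ).rank := by rw [rank_one, Fintype.card_fin]
      _ = ((Bmat19 0).submatrix r c).rank := by rw [hminor]
      _ ≤ (Bmat19 0).rank := rank_submatrix_le _ _ _

theorem charpoly_neg_Bmat19_zero : (-Bmat19 0).charpoly = (Bmat19 0).charpoly := by
  let D : Matrix (Fin 6) (Fin 6) ℝ := diagonal ![1, 1, 1, 1, -1, -1]
  refine charpoly_neg_eq_of_mul_mul_eq_neg (D := D) ?_ ?_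
  · rw [diagonal_mul_diagonal, ← diagonal_one]
    congr 1
    ext i; fin_cases i <;> norm_num
  · ext i j
    simp only [D, diagonal_mul, mul_diagonal]
    fin_cases i <;> fin_cases j <;> norm_num [Bmat19]

theorem stmt_19 (α : ℝ) (hB : (Bmat19 α).IsHermitian) :
    ((Bmat19 α).rank = 4 ↔ α = 0) ∧
      (α = 0 →
        Fintype.card {i // 0 < hB.eigenvalues i} = 2 ∧
        Fintype.card {i // hB.eigenvalues i < 0} = 2) := by
  refine ⟨⟨fun hrank => ?_, fun hα => hα ▸ rank_Bmat19_zero⟩, fun hα => ?_⟩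
  · by_contra hα
    rw [rank_Bmat19_of_ne_zero hα] at hrank
    exact absurd hrank (by norm_num)
  · subst hα
    have hsum := hB.card_pos_add_card_neg_eigenvalues
    have hsymm := hB.card_pos_eigenvalues_eq_card_neg charpoly_neg_Bmat19_zero
    rw [rank_Bmat19_zero] at hsum
    omega
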